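/- If the fundamental tensor F satisfies the defining condition of class F₇, then the torsion tensor of the second natural connection is T²(x,y,z) = (F(y,φx,ξ) − F(x,φy,ξ)) η(z) for all x, y, z ∈ V (that is, T² = dη ⊗ η, where dη(x,y) = F(y,φx,ξ) − F(x,φy,ξ) is the exterior derivative of η expressed through F). -/

import Mathlib

open scoped RealInnerProductSpace

noncomputable section

variable {V : Type*} [NormedAddCommGroup V] [InnerProductSpace ℝ V]

/-- A Riemannian Π-structure on a real inner product space `V`:
a linear map `phi`, a vector `xi` (with dual form `η x = ⟪x, xi⟫`) satisfying
the defining algebraic identities. -/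
structure PiStruct (V : Type*) [NormedAddCommGroup V] [InnerProductSpace ℝ V] where
  phi : V →ₗ[ℝ] V
  xi : V
  phi_xi : phi xi = 0
  phi_phi : ∀ x : V, phi (phi x) = x - (⟪x, xi⟫ : ℝ) • xi
  eta_phi : ∀ x : V, ⟪phi x, xi⟫ = 0
  eta_xi : ⟪xi, xi⟫ = (1 : ℝ)
  g_phi_phi : ∀ x y : V, ⟪phi x, phi y⟫ = ⟪x, y⟫ - ⟪x, xi⟫ * ⟪y, xi⟫
  g_phi_symm : ∀ x y : V, ⟪phi x, y⟫ = ⟪x, phi y⟫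

/-- Trilinear real-valued maps on `V`. -/
abbrev Tri (V : Type*) [NormedAddCommGroup V] [InnerProductSpace ℝ V] :=
  V →ₗ[ℝ] V →ₗ[ℝ] V →ₗ[ℝ] ℝ

/-- The 1-form `η(x) = g(x, ξ)`. -/
def PiStruct.eta (P : PiStruct V) (x : V) : ℝ := ⟪x, P.xi⟫

/-- `F` is a fundamental tensor for the Π-structure `P`. -/
def IsFund (P : PiStruct V) (F : Tri V) : Prop :=
  (∀ x y z : V, F x y z = F x z y) ∧
  (∀ x y z : V, F x y z =
    -F x (P.phi y) (P.phi z) + P.eta y * F x P.xi z + P.eta z * F x y P.xi)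

/-- The Nijenhuis tensor of `F`. -/
def Nij (P : PiStruct V) (F : Tri V) (x y z : V) : ℝ :=
  F (P.phi x) y z - F (P.phi y) x z - F x y (P.phi z) + F y x (P.phi z)
    + P.eta z * (F x (P.phi y) P.xi - F y (P.phi x) P.xi)

/-- The potential of the first natural connection. -/
def Q1 (P : PiStruct V) (F : Tri V) (x y z : V) : ℝ :=
  -(1/2) * F x (P.phi y) z - (1/2) * P.eta z * F x (P.phi y) P.xi
    + P.eta y * F x (P.phi z) P.xi

/-- The potential of the second natural connection. -/
def Q2 (P : PiStruct V) (F : Tri V) (x y z : V) : ℝ :=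
  Q1 P F x y z - (1/8) * (Nij P F (P.phi (P.phi z)) (P.phi (P.phi y)) (P.phi (P.phi x))
    + 2 * P.eta x * Nij P F (P.phi z) (P.phi y) P.xi)

/-- The torsion tensor of the first natural connection. -/
def T1 (P : PiStruct V) (F : Tri V) (x y z : V) : ℝ :=
  -(1/2) * (F x (P.phi y) z - F y (P.phi x) z)
    - (1/2) * P.eta z * (F x (P.phi y) P.xi - F y (P.phi x) P.xi)
    + P.eta y * F x (P.phi z) P.xi - P.eta x * F y (P.phi z) P.xi

/-- The torsion tensor of the second natural connection. -/
def T2 (P : PiStruct V) (F : Tri V) (x y z : V) : ℝ :=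
  Q2 P F x y z - Q2 P F y x z

/-- Identity (*) for a torsion-like tensor `T`. -/
def StarId (P : PiStruct V) (T : V → V → V → ℝ) : Prop :=
  ∀ x y z : V,
    T x y z + T y z x + T (P.phi x) y (P.phi z) + T y (P.phi z) (P.phi x)
    - P.eta x * (T P.xi y z + T y z P.xi - P.eta y * T P.xi z P.xi)
    - P.eta y * (T x P.xi z + T P.xi z x + T (P.phi x) P.xi (P.phi z)
        + T P.xi (P.phi z) (P.phi x))
    - P.eta z * (T x y P.xi + T y P.xi x - P.eta y * T x P.xi P.xi) = 0

/-- The defining condition of the basic class F₇. -/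
def ClassF7 (P : PiStruct V) (F : Tri V) : Prop :=
  (∀ x y z : V, F x y z = F x y P.xi * P.eta z + F x z P.xi * P.eta y) ∧
  (∀ x y : V, F x y P.xi = -F y x P.xi) ∧
  (∀ x y : V, F x y P.xi = F (P.phi x) (P.phi y) P.xi)


namespace PiStruct

variable (P : PiStruct V)

@[simp]
theorem eta_phi_apply (x : V) : P.eta (P.phi x) = 0 :=
  P.eta_phi x

@[simp]
theorem eta_self : P.eta P.xi = 1 :=
  P.eta_xi

end PiStruct

/-! In class F₇ the whole tensor is encoded by the 2-form `ω(a, b) = F(a, b, ξ)`, which is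
skew-symmetric and φ-invariant; the Nijenhuis terms of `Q²` then collapse to `ω(φz, y) η(x)`,
and these contributions cancel in `T²(x, y, z) = Q²(x, y, z) − Q²(y, x, z)`. -/

namespace ClassF7

variable {P : PiStruct V} {F : Tri V} (h : ClassF7 P F)
include h

theorem apply_eq (a b c : V) : F a b c = F a b P.xi * P.eta c + F a c P.xi * P.eta b :=
  h.1 a b c

theorem apply_xi_swap (a b : V) : F a b P.xi = -F b a P.xi :=
  h.2.1 a b

theorem apply_xi_eq_phi_phi (a b : V) : F a b P.xi = F (P.phi a) (P.phi b) P.xi :=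
  h.2.2 a b

theorem apply_xi_xi (a : V) : F a P.xi P.xi = 0 := by
  rw [h.apply_xi_eq_phi_phi, P.phi_xi]
  simp

theorem xi_apply_xi (a : V) : F P.xi a P.xi = 0 := by
  rw [h.apply_xi_swap, h.apply_xi_xi, neg_zero]

theorem apply_phi_phi_xi (a b : V) : F a (P.phi (P.phi b)) P.xi = F a b P.xi := by
  simp [P.phi_phi b, h.apply_xi_xi]

theorem phi_apply_xi (a b : V) : F (P.phi a) b P.xi = F a (P.phi b) P.xi := by
  rw [h.apply_xi_eq_phi_phi (P.phi a) b, P.phi_phi a]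
  simp [h.xi_apply_xi]

theorem phi_apply_xi_swap (a b : V) : F (P.phi a) b P.xi = -F (P.phi b) a P.xi := by
  rw [h.phi_apply_xi, h.apply_xi_swap]

theorem apply_eq_zero_of_eta_eq_zero {a b c : V} (hb : P.eta b = 0) (hc : P.eta c = 0) :
    F a b c = 0 := by
  rw [h.apply_eq a b c, hb, hc, mul_zero, mul_zero, add_zero]

theorem nij_eq_zero_of_eta_eq_zero {x y z : V} (hx : P.eta x = 0) (hy : P.eta y = 0)
    (hz : P.eta z = 0) : Nij P F x y z = 0 := by
  simp only [Nij, hz, h.apply_eq_zero_of_eta_eq_zero hx hz, h.apply_eq_zero_of_eta_eq_zero hy hz,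
    h.apply_eq_zero_of_eta_eq_zero hy (P.eta_phi_apply z),
    h.apply_eq_zero_of_eta_eq_zero hx (P.eta_phi_apply z)]
  ring

theorem nij_phi_phi_xi (b c : V) : Nij P F (P.phi c) (P.phi b) P.xi = 4 * F (P.phi c) b P.xi := by
  simp only [Nij, P.phi_xi, map_zero, P.eta_self, h.phi_apply_xi (P.phi c),
    h.phi_apply_xi (P.phi b), h.apply_phi_phi_xi, h.phi_apply_xi_swap b c]
  ring

theorem q1_eq (a b c : V) :
    Q1 P F a b c = -F a (P.phi b) P.xi * P.eta c + P.eta b * F a (P.phi c) P.xi := by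
  rw [Q1, h.apply_eq a (P.phi b) c, P.eta_phi_apply]
  ring

theorem q2_eq (a b c : V) :
    Q2 P F a b c = Q1 P F a b c - P.eta a * F (P.phi c) b P.xi := by
  rw [Q2, h.nij_eq_zero_of_eta_eq_zero (P.eta_phi_apply _) (P.eta_phi_apply _)
    (P.eta_phi_apply _), h.nij_phi_phi_xi]
  ring

end ClassF7

theorem classF7_T2_formula_general
    (P : PiStruct V) (F : Tri V)
    (h7 : ClassF7 P F) :
    ∀ x y z : V, T2 P F x y z =
      (F y (P.phi x) P.xi - F x (P.phi y) P.xi) * P.eta z := by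
  intro x y z
  rw [T2, h7.q2_eq, h7.q2_eq, h7.q1_eq, h7.q1_eq, h7.phi_apply_xi_swap z x,
    h7.phi_apply_xi_swap z y, h7.phi_apply_xi x z, h7.phi_apply_xi y z]
  ring

/-- in the class F₇ the torsion of the second natural connection is
`T²(x,y,z) = (F(y,φx,ξ) − F(x,φy,ξ)) η(z)`, i.e. `T² = dη ⊗ η`. -/
theorem classF7_T2_formula
    [FiniteDimensional ℝ V] (n : ℕ) (hn : 1 ≤ n)
    (hdim : Module.finrank ℝ V = 2 * n + 1)
    (P : PiStruct V) (F : Tri V) (hF : IsFund P F)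
    (h7 : ClassF7 P F) :
    ∀ x y z : V, T2 P F x y z =
      (F y (P.phi x) P.xi - F x (P.phi y) P.xi) * P.eta z :=
  classF7_T2_formula_general P F h7
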